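/- Let F be an algebraically closed field and n a positive integer. For μ ∈ ℤⁿ and t ∈ (Fˣ)ⁿ set χ_μ(t) = ∏_{i=1}^{n} (t i)^(μ i), using integer powers in the group Fˣ. Then for every finite set Ω ⊆ ℤⁿ there exists t ∈ (Fˣ)ⁿ such that the values χ_μ(t) for μ ∈ Ω are pairwise distinct, i.e. χ_μ(t) ≠ χ_ν(t) whenever μ, ν ∈ Ω and μ ≠ ν. -/
import Mathlib

/-- Base-`B` digits with absolute value `< B`: if the value is `0`, all digits are `0`. -/
private lemma digits_zero_of_sum_eq_zero :
    ∀ (m : ℕ) (B : ℤ) (δ : Fin m → ℤ), (∀ i, |δ i| < B) →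
      (∑ i, δ i * B ^ (i : ℕ)) = 0 → ∀ i, δ i = 0 := by
  intro m
  induction m with
  | zero => intro B δ _ _ i; exact absurd i.pos (by simp)
  | succ k ih =>
    intro B δ hδ hsum i
    have hBpos : 0 < B := lt_of_le_of_lt (abs_nonneg _) (hδ 0)
    rw [Fin.sum_univ_succ] at hsum
    have hfac : ∀ j : Fin k, δ j.succ * B ^ (j.succ : ℕ) =
        B * (δ j.succ * B ^ (j : ℕ)) := by
      intro j
      rw [Fin.val_succ, pow_succ]
      ring
    rw [Finset.sum_congr rfl (fun j _ => hfac j), ← Finset.mul_sum] at hsum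
    have h00 : δ 0 * B ^ ((0 : Fin (k + 1)) : ℕ) = δ 0 := by norm_num
    rw [h00] at hsum
    have hdvd : B ∣ δ 0 :=
      ⟨-(∑ j : Fin k, δ j.succ * B ^ (j : ℕ)), by rw [mul_neg]; linarith⟩
    have h0 : δ 0 = 0 := by
      rcases hdvd with ⟨q, hq⟩
      by_contra h0ne
      have hq0 : q ≠ 0 := fun h => h0ne (by simp [hq, h])
      have hq1 : 1 ≤ |q| := Int.one_le_abs hq0
      have habs : |δ 0| = B * |q| := by rw [hq, abs_mul, abs_of_pos hBpos]
      nlinarith [hδ 0]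
    have hrest : (∑ j : Fin k, δ j.succ * B ^ (j : ℕ)) = 0 := by
      have hz : B * (∑ j : Fin k, δ j.succ * B ^ (j : ℕ)) = 0 := by
        rw [h0] at hsum; linarith
      exact (mul_eq_zero.mp hz).resolve_left hBpos.ne'
    have htail := ih B (fun j => δ j.succ) (fun j => hδ j.succ) hrest
    rcases Fin.eq_zero_or_eq_succ i with rfl | ⟨j, rfl⟩
    · exact h0
    · exact htail j

private lemma zpow_finset_sum {G : Type*} [CommGroup G] {ι : Type*} (x : G) (s : Finset ι)
    (f : ι → ℤ) : x ^ (∑ i ∈ s, f i) = ∏ i ∈ s, x ^ f i := by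
  classical
  induction s using Finset.cons_induction with
  | empty => simp
  | cons a s ha ih => rw [Finset.sum_cons, Finset.prod_cons, zpow_add, ih]

/-- **Lemma 2.3(1).** Over an algebraically closed field `F`, for any finite set `Ω` of
characters `μ : Fin n → ℤ` of the torus `(Fˣ)ⁿ` (where `χ_μ(t) = ∏ i, (t i) ^ (μ i)`),
there is an element `t` of the torus separating the characters in `Ω`, i.e. taking
pairwise distinct values on them. -/
theorem exists_torus_element_separating
    {F : Type*} [Field F] [IsAlgClosed F] {n : ℕ} (hn : 0 < n)
    (Ω : Finset (Fin n → ℤ)) :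
    ∃ t : Fin n → Fˣ, ∀ μ ∈ Ω, ∀ ν ∈ Ω, μ ≠ ν →
      (∏ i, (t i) ^ (μ i)) ≠ (∏ i, (t i) ^ (ν i)) := by
  classical
  -- a bound on the absolute values of all coordinates of characters in Ω
  obtain ⟨c, hbound⟩ : ∃ c : ℕ, ∀ μ ∈ Ω, ∀ i, |μ i| ≤ (c : ℤ) := by
    refine ⟨Ω.sup (fun μ => Finset.univ.sup fun i => (μ i).natAbs), fun μ hμ i => ?_⟩
    have h1 : (μ i).natAbs ≤ Finset.univ.sup fun i => (μ i).natAbs :=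
      Finset.le_sup (f := fun i => (μ i).natAbs) (Finset.mem_univ i)
    have h2 : (Finset.univ.sup fun i => (μ i).natAbs) ≤
        Ω.sup (fun μ => Finset.univ.sup fun i => (μ i).natAbs) :=
      Finset.le_sup (f := fun μ => Finset.univ.sup fun i => (μ i).natAbs) hμ
    have h3 := le_trans h1 h2
    rw [Int.abs_eq_natAbs]
    exact_mod_cast h3
  -- base
  set B : ℤ := 2 * c + 1 with hB
  have hBpos : 0 < B := by positivity
  have hBc : ∀ μ ∈ Ω, ∀ ν ∈ Ω, ∀ i, |μ i - ν i| ≤ B - 1 := by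
    intro μ hμ ν hν i
    have h1 := hbound μ hμ i; have h2 := hbound ν hν i
    have h3 := abs_sub (μ i) (ν i)
    omega
  -- the exponent map
  set e : (Fin n → ℤ) → ℤ := fun μ => ∑ i, μ i * B ^ (i : ℕ) with he
  have hediff : ∀ μ ν : Fin n → ℤ,
      (∑ i, (μ i - ν i) * B ^ (i : ℕ)) = e μ - e ν := by
    intro μ ν
    simp [he, sub_mul, Finset.sum_sub_distrib]
  -- e is injective on Ω
  have hinj : ∀ μ ∈ Ω, ∀ ν ∈ Ω, μ ≠ ν → e μ ≠ e ν := by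
    intro μ hμ ν hν hne heq
    apply hne
    funext i
    have h := digits_zero_of_sum_eq_zero n B (fun i => μ i - ν i)
      (fun i => lt_of_le_of_lt (hBc μ hμ ν hν i) (by omega))
      (by rw [hediff, heq, sub_self]) i
    omega
  -- bound on the differences of exponents
  set K : ℤ := B ^ n with hK
  have hKpos : 0 < K := pow_pos hBpos n
  have hbnd : ∀ μ ∈ Ω, ∀ ν ∈ Ω, |e μ - e ν| < K := by
    intro μ hμ ν hν
    have h1 : |e μ - e ν| ≤ ∑ i, |(μ i - ν i)| * B ^ (i : ℕ) := by
      rw [← hediff]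
      refine le_trans (Finset.abs_sum_le_sum_abs _ _) ?_
      refine Finset.sum_le_sum fun i _ => ?_
      rw [abs_mul, abs_pow, abs_of_pos hBpos]
    have h2 : ∑ i, |(μ i - ν i)| * B ^ (i : ℕ) ≤ ∑ i : Fin n, (B - 1) * B ^ (i : ℕ) :=
      Finset.sum_le_sum fun i _ =>
        mul_le_mul_of_nonneg_right (hBc μ hμ ν hν i) (pow_nonneg hBpos.le _)
    have h3 : ∑ i : Fin n, (B - 1) * B ^ (i : ℕ) = B ^ n - 1 := by
      rw [← Finset.mul_sum, Fin.sum_univ_eq_sum_range (fun i => B ^ i), mul_comm,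
        geom_sum_mul]
    have h4 := h3 ▸ h2
    have := le_trans h1 h4
    omega
  -- pick x ∈ Fˣ with x ^ M ≠ 1 where M = (K - 1)!
  set M : ℕ := Nat.factorial (K.toNat - 1) with hM
  have hMpos : 0 < M := Nat.factorial_pos _
  obtain ⟨y, hy⟩ : ∃ y : F, ¬ (Polynomial.X ^ (M + 1) - Polynomial.X : Polynomial F).IsRoot y := by
    have hpne : (Polynomial.X ^ (M + 1) - Polynomial.X : Polynomial F) ≠ 0 := by
      intro h
      have h' := congrArg (fun p => Polynomial.coeff p (M + 1)) h
      simp [Polynomial.coeff_X, hMpos.ne'] at h'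
    have hfin := Polynomial.finite_setOf_isRoot hpne
    obtain ⟨y, hy⟩ := hfin.infinite_compl.nonempty
    exact ⟨y, hy⟩
  have hy' : y ^ (M + 1) ≠ y := by
    intro h; apply hy; simp [Polynomial.IsRoot, h]
  have hy0 : y ≠ 0 := by intro h; apply hy'; simp [h, hMpos.ne']
  set x : Fˣ := Units.mk0 y hy0 with hx
  have hxM : x ^ M ≠ 1 := by
    intro h
    apply hy'
    have hv : (x : F) ^ M = 1 := by
      have := congrArg (Units.val) h; simpa using this
    calc y ^ (M + 1) = y ^ M * y := by ring
    _ = y := by rw [show y ^ M = (x : F) ^ M from rfl, hv, one_mul]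
  -- key: x ^ d ≠ 1 for 0 < |d| < K
  have hxd : ∀ d : ℤ, d ≠ 0 → |d| < K → x ^ d ≠ 1 := by
    intro d hd hdK h1
    have habs : x ^ (d.natAbs) = 1 := by
      rcases le_or_gt 0 d with h | h
      · have hd' : d = (d.natAbs : ℤ) := by omega
        rw [hd', zpow_natCast] at h1; exact h1
      · have hd' : d = -(d.natAbs : ℤ) := by omega
        rw [hd', zpow_neg, zpow_natCast, inv_eq_one] at h1; exact h1
    have hna : (d.natAbs : ℤ) = |d| := (Int.abs_eq_natAbs d).symm
    have h1le : 1 ≤ d.natAbs := by omega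
    have hle : d.natAbs ≤ K.toNat - 1 := by omega
    rcases Nat.dvd_factorial h1le hle with ⟨q, hq⟩
    apply hxM
    rw [hM, hq, pow_mul, habs, one_pow]
  -- the torus element
  refine ⟨fun i => x ^ ((B.toNat) ^ (i.val)), ?_⟩
  have hprod : ∀ μ : Fin n → ℤ,
      (∏ i : Fin n, (x ^ ((B.toNat) ^ (i.val))) ^ (μ i)) = x ^ (e μ) := by
    intro μ
    rw [show e μ = ∑ i : Fin n, μ i * B ^ (i.val) from rfl]
    rw [zpow_finset_sum]
    refine Finset.prod_congr rfl fun i _ => ?_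
    rw [← zpow_natCast x ((B.toNat) ^ (i.val)), ← zpow_mul]
    congr 1
    have hBt : ((B.toNat : ℤ)) = B := by omega
    push_cast
    rw [hBt]; ring
  intro μ hμ ν hν hne h
  rw [hprod μ, hprod ν] at h
  have hd : e μ - e ν ≠ 0 := sub_ne_zero.mpr (hinj μ hμ ν hν hne)
  apply hxd (e μ - e ν) hd (hbnd μ hμ ν hν)
  rw [zpow_sub, h]
  simp
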